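/- arXiv:1001.2734 — 2 statements merged into one kernel-verified Lean document; each statement's English description precedes it below -/
import Mathlib

section
/- Let L be a finite set of at least two non-vertical lines in ℝ², pairwise non-parallel (so any two lines of L intersect in exactly one point and all slopes are distinct). Then there exist two lines ℓ, ℓ' ∈ L that are adjacent in the ordering of L by slope (i.e., no line of L has slope strictly between the slopes of ℓ and ℓ') such that the x-coordinate of the intersection point of ℓ and ℓ' is minimal among the x-coordinates of all pairwise intersection points of lines in L. -/
/-!
Among the pairs of distinct lines, take one whose intersection `(m, y)` is leftmost and,
among those, whose slopes are closest. If some line `c` had slope strictly between the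
slopes `s < s'` of this pair, then `c` passes through `(m, y)`: were it above that point, it
would meet the line of slope `s` to the left of `m`; were it below, it would meet the line of
slope `s'` to the left of `m`. But then `c` and the line of slope `s` form a leftmost pair
with closer slopes.
-/

/-- A non-vertical line is represented by a pair `(a, b) : ℝ × ℝ`, standing
for the line `{(x, a * x + b) : x ∈ ℝ}`; `a` is its slope. Two non-parallel
lines `l` and `l'` meet at the point with x-coordinate
`(l'.2 - l.2) / (l.1 - l'.1)`. -/
noncomputable def interX (l l' : ℝ × ℝ) : ℝ := (l'.2 - l.2) / (l.1 - l'.1)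

lemma interX_comm (l l' : ℝ × ℝ) : interX l l' = interX l' l := by
  rw [interX, interX, ← neg_sub l.2, ← neg_sub l'.1, neg_div_neg_eq]

lemma interX_eq_iff {l l' : ℝ × ℝ} (h : l.1 ≠ l'.1) {x : ℝ} :
    interX l l' = x ↔ l.1 * x + l.2 = l'.1 * x + l'.2 := by
  rw [interX, div_eq_iff (sub_ne_zero.mpr h)]
  constructor <;> intro <;> linarith

lemma interX_lt_iff_of_slope_lt {l l' : ℝ × ℝ} (h : l.1 < l'.1) {x : ℝ} :
    interX l l' < x ↔ l.1 * x + l.2 < l'.1 * x + l'.2 := by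
  rw [interX, div_lt_iff_of_neg (sub_neg.mpr h)]
  constructor <;> intro <;> linarith

lemma interX_eq_of_slope_between {lo c hi : ℝ × ℝ} (hlo : lo.1 < c.1) (hhi : c.1 < hi.1)
    (hlo_le : interX lo hi ≤ interX lo c) (hhi_le : interX lo hi ≤ interX c hi) :
    interX lo c = interX lo hi := by
  set m := interX lo hi
  have hmeet : lo.1 * m + lo.2 = hi.1 * m + hi.2 := (interX_eq_iff (by linarith)).mp rfl
  have hc_le : c.1 * m + c.2 ≤ lo.1 * m + lo.2 :=
    not_lt.mp fun h => hlo_le.not_gt ((interX_lt_iff_of_slope_lt hlo).mpr h)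
  have hc_ge : hi.1 * m + hi.2 ≤ c.1 * m + c.2 :=
    not_lt.mp fun h => hhi_le.not_gt ((interX_lt_iff_of_slope_lt hhi).mpr h)
  exact (interX_eq_iff hlo.ne).mpr (by linarith)

lemma slope_adjacent_of_minimal {L : Finset (ℝ × ℝ)}
    (hslopes : ∀ l ∈ L, ∀ l' ∈ L, l ≠ l' → l.1 ≠ l'.1) {l l' : ℝ × ℝ}
    (hl : l ∈ L) (hl' : l' ∈ L) (hne : l ≠ l')
    (hmin : ∀ a ∈ L, ∀ b ∈ L, a ≠ b → interX l l' ≤ interX a b)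
    (hgap : ∀ a ∈ L, ∀ b ∈ L, a ≠ b → interX a b = interX l l' →
      |l.1 - l'.1| ≤ |a.1 - b.1|) :
    ∀ l'' ∈ L, ¬(min l.1 l'.1 < l''.1 ∧ l''.1 < max l.1 l'.1) := by
  wlog hlt : l.1 < l'.1 generalizing l l'
  · have hgt : l'.1 < l.1 := (hslopes l hl l' hl' hne).lt_or_gt.resolve_left hlt
    rw [min_comm, max_comm]
    refine this hl' hl hne.symm (fun a ha b hb hab => ?_) (fun a ha b hb hab hab' => ?_) hgt
    · rw [interX_comm]; exact hmin a ha b hb hab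
    · rw [abs_sub_comm]; exact hgap a ha b hb hab (by rwa [interX_comm l])
  rintro c hc ⟨hlo, hhi⟩
  rw [min_eq_left hlt.le] at hlo
  rw [max_eq_right hlt.le] at hhi
  have hlc : l ≠ c := fun h => hlo.ne (congrArg Prod.fst h)
  have hcl' : c ≠ l' := fun h => hhi.ne (congrArg Prod.fst h)
  have hconc := interX_eq_of_slope_between hlo hhi (hmin l hl c hc hlc) (hmin c hc l' hl' hcl')
  have := hgap l hl c hc hlc hconc
  rw [abs_of_neg (sub_neg.mpr hlt), abs_of_neg (sub_neg.mpr hlo)] at this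
  linarith

/-- Given a finite set `L` of at least two pairwise non-parallel non-vertical
lines, there are two lines of `L` that are adjacent in the ordering of `L` by
slope whose intersection point has the smallest x-coordinate among all
pairwise intersection points of lines of `L`. -/
theorem leftmost_intersection_of_slope_adjacent_lines
    (L : Finset (ℝ × ℝ)) (hcard : 2 ≤ L.card)
    (hslopes : ∀ l ∈ L, ∀ l' ∈ L, l ≠ l' → l.1 ≠ l'.1) :
    ∃ l ∈ L, ∃ l' ∈ L, l ≠ l' ∧
      (∀ l'' ∈ L, ¬(min l.1 l'.1 < l''.1 ∧ l''.1 < max l.1 l'.1)) ∧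
      ∀ a ∈ L, ∀ b ∈ L, a ≠ b → interX l l' ≤ interX a b := by
  obtain ⟨a₀, ha₀, b₀, hb₀, hab₀⟩ := Finset.one_lt_card.mp hcard
  have hpairs : L.offDiag.Nonempty := ⟨(a₀, b₀), Finset.mem_offDiag.mpr ⟨ha₀, hb₀, hab₀⟩⟩
  obtain ⟨⟨l, l'⟩, hp, hkey⟩ := L.offDiag.exists_min_image
    (fun p => toLex (interX p.1 p.2, |p.1.1 - p.2.1|)) hpairs
  obtain ⟨hl, hl', hne⟩ := Finset.mem_offDiag.mp hp
  have hkey' : ∀ a ∈ L, ∀ b ∈ L, a ≠ b → interX l l' < interX a b ∨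
      interX l l' = interX a b ∧ |l.1 - l'.1| ≤ |a.1 - b.1| := fun a ha b hb hab =>
    Prod.Lex.toLex_le_toLex.mp (hkey (a, b) (Finset.mem_offDiag.mpr ⟨ha, hb, hab⟩))
  have hmin : ∀ a ∈ L, ∀ b ∈ L, a ≠ b → interX l l' ≤ interX a b := fun a ha b hb hab =>
    (hkey' a ha b hb hab).elim le_of_lt fun h => h.1.le
  have hgap : ∀ a ∈ L, ∀ b ∈ L, a ≠ b → interX a b = interX l l' →
      |l.1 - l'.1| ≤ |a.1 - b.1| := fun a ha b hb hab heq =>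
    (hkey' a ha b hb hab).elim (fun h => absurd heq h.ne') fun h => h.2
  exact ⟨l, hl, l', hl', hne, slope_adjacent_of_minimal hslopes hl hl' hne hmin hgap, hmin⟩
end

section
/- There is an absolute constant κ > 0 with the following property. For every integer n ≥ 2, every real c ≥ 1, every real δ with 0 < δ ≤ 1, and all natural numbers m_p ≥ 1 and m'_p with m_p ≤ m'_p ≤ 2·m_p, δ·n ≤ m'_p and m'_p ≤ 4n², the following holds. Let B be a binomial random variable with N = ⌈4·c·n·ln n⌉ trials and success probability m'_p/(4n²), and let M = (n/(c·ln n))·B. Then Pr[m_p − δ·n ≤ M ≤ 2·m_p + δ·n] ≥ 1 − 2·n^{−κ·δ²·c·n/m_p}. -/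
/-!
Write `B` for the binomial count and `μ = N t` for its mean. The moment generating function
`(t eˡ + 1 - t)ᴺ ≤ exp (μ (eˡ - 1))`, Markov's inequality and `eˡ - 1 ≤ l + l²` for `|l| ≤ 1`
give, with `l = ±d / (2μ)`, the Chernoff bound `P(|B - μ| > d) ≤ 2 exp (-d² / (4μ))`.
With `q = c ln n / n` the estimator is `M = B / q`, and rounding `N` up gives
`q m'_p ≤ μ ≤ q m'_p + 1`. Take `d = a / 2` where `a = q δ n = δ c ln n`: since
`m_p ≤ m'_p ≤ 2 m_p`, the window `[μ - d, μ + d]` lies in `[q m_p - a, 2 q m_p + a]` as soon as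
`a ≥ 2`, and then `μ ≤ 3 q m_p`, so `d² / (4μ) ≥ a² / (48 q m_p) = δ² c n ln n / (48 m_p)`.
This gives `κ = 1/48`. If `a < 2`, the exponent is at most `1/12 < ln 2`, and the claimed lower
bound is nonpositive.
-/

open Finset

/-- The probability that a binomial random variable with `N` trials and
success probability `t` takes the value `k`. -/
noncomputable def binomPMF (N : ℕ) (t : ℝ) (k : ℕ) : ℝ :=
  (N.choose k : ℝ) * t ^ k * (1 - t) ^ (N - k)

open Real

noncomputable def binomProb (N : ℕ) (t : ℝ) (P : ℕ → Prop) [DecidablePred P] : ℝ :=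
  ∑ k ∈ range (N + 1), if P k then binomPMF N t k else 0

section Binomial

variable {N : ℕ} {t : ℝ}

lemma binomPMF_nonneg (ht0 : 0 ≤ t) (ht1 : t ≤ 1) (k : ℕ) : 0 ≤ binomPMF N t k := by
  have : 0 ≤ 1 - t := sub_nonneg.2 ht1
  unfold binomPMF
  positivity

lemma sum_binomPMF_mul_pow (N : ℕ) (t r : ℝ) :
    ∑ k ∈ range (N + 1), binomPMF N t k * r ^ k = (t * r + (1 - t)) ^ N := by
  rw [add_pow]
  refine sum_congr rfl fun k _ => ?_
  rw [binomPMF, mul_pow]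
  ring

lemma sum_binomPMF (N : ℕ) (t : ℝ) : ∑ k ∈ range (N + 1), binomPMF N t k = 1 := by
  simpa using sum_binomPMF_mul_pow N t 1

lemma sum_binomPMF_mul_exp_le (ht0 : 0 ≤ t) (ht1 : t ≤ 1) (lam : ℝ) :
    ∑ k ∈ range (N + 1), binomPMF N t k * exp (lam * k) ≤ exp (N * t * (exp lam - 1)) := by
  simp_rw [mul_comm lam, exp_nat_mul, sum_binomPMF_mul_pow, mul_assoc (N : ℝ), exp_nat_mul]
  have : 0 ≤ t * exp lam := by positivity
  exact pow_le_pow_left₀ (by linarith) (by linarith [add_one_le_exp (t * (exp lam - 1))]) N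

lemma binomProb_nonneg (ht0 : 0 ≤ t) (ht1 : t ≤ 1) (P : ℕ → Prop) [DecidablePred P] :
    0 ≤ binomProb N t P :=
  sum_nonneg fun k _ => by
    split_ifs
    exacts [binomPMF_nonneg ht0 ht1 k, le_rfl]

lemma binomProb_mono (ht0 : 0 ≤ t) (ht1 : t ≤ 1) {P Q : ℕ → Prop} [DecidablePred P]
    [DecidablePred Q] (h : ∀ k, P k → Q k) : binomProb N t P ≤ binomProb N t Q := by
  refine sum_le_sum fun k _ => ?_
  split_ifs with hP hQ
  · exact le_rfl
  · exact absurd (h k hP) hQ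
  · exact binomPMF_nonneg ht0 ht1 k
  · exact le_rfl

lemma binomProb_or_le (ht0 : 0 ≤ t) (ht1 : t ≤ 1) (P Q : ℕ → Prop) [DecidablePred P]
    [DecidablePred Q] :
    binomProb N t (fun k => P k ∨ Q k) ≤ binomProb N t P + binomProb N t Q := by
  rw [binomProb, binomProb, binomProb, ← sum_add_distrib]
  refine sum_le_sum fun k _ => ?_
  have := binomPMF_nonneg (N := N) ht0 ht1 k
  split_ifs <;> simp_all

lemma binomProb_add_binomProb_not (P : ℕ → Prop) [DecidablePred P] :
    binomProb N t P + binomProb N t (fun k => ¬ P k) = 1 := by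
  rw [binomProb, binomProb, ← sum_add_distrib, ← sum_binomPMF N t]
  refine sum_congr rfl fun k _ => ?_
  split_ifs <;> simp

lemma binomProb_le_exp_of_le_mul (ht0 : 0 ≤ t) (ht1 : t ≤ 1) {P : ℕ → Prop} [DecidablePred P]
    {y lam : ℝ} (hP : ∀ k, P k → y ≤ lam * k) :
    binomProb N t P ≤ exp (-y + N * t * (exp lam - 1)) := by
  rw [exp_add, exp_neg, ← div_eq_inv_mul, le_div_iff₀ (exp_pos y)]
  refine le_trans ?_ (sum_binomPMF_mul_exp_le ht0 ht1 lam)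
  rw [binomProb, sum_mul]
  refine sum_le_sum fun k _ => ?_
  have := binomPMF_nonneg (N := N) ht0 ht1 k
  split_ifs with hk
  · exact mul_le_mul_of_nonneg_left (exp_le_exp.2 (hP k hk)) this
  · simp only [zero_mul]
    positivity

lemma exp_sub_one_le_add_sq {x : ℝ} (hx : |x| ≤ 1) : exp x - 1 ≤ x + x ^ 2 := by
  linarith [(abs_le.1 (abs_exp_sub_one_sub_id_le hx)).2]

lemma binomProb_upper_tail_le (ht0 : 0 ≤ t) (ht1 : t ≤ 1) (hμ : 0 < N * t) {d : ℝ}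
    (hd0 : 0 ≤ d) (hd : d ≤ 2 * (N * t)) :
    binomProb N t (fun k => N * t + d < k) ≤ exp (-(d ^ 2 / (4 * (N * t)))) := by
  set μ : ℝ := N * t
  have hlam : |d / (2 * μ)| ≤ 1 := by
    rw [abs_of_nonneg (by positivity), div_le_one (by positivity)]
    exact hd
  refine (binomProb_le_exp_of_le_mul ht0 ht1 (y := d / (2 * μ) * (μ + d))
    fun k hk => mul_le_mul_of_nonneg_left hk.le (by positivity)).trans (exp_le_exp.2 ?_)
  calc -(d / (2 * μ) * (μ + d)) + μ * (exp (d / (2 * μ)) - 1)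
      ≤ -(d / (2 * μ) * (μ + d)) + μ * (d / (2 * μ) + (d / (2 * μ)) ^ 2) := by
        gcongr
        exact exp_sub_one_le_add_sq hlam
    _ = -(d ^ 2 / (4 * μ)) := by
        field_simp
        ring

lemma binomProb_lower_tail_le (ht0 : 0 ≤ t) (ht1 : t ≤ 1) (hμ : 0 < N * t) {d : ℝ}
    (hd0 : 0 ≤ d) (hd : d ≤ 2 * (N * t)) :
    binomProb N t (fun k => (k : ℝ) < N * t - d) ≤ exp (-(d ^ 2 / (4 * (N * t)))) := by
  set μ : ℝ := N * t
  have hlam0 : 0 ≤ d / (2 * μ) := by positivity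
  have hlam : |-(d / (2 * μ))| ≤ 1 := by
    rw [abs_neg, abs_of_nonneg hlam0, div_le_one (by positivity)]
    exact hd
  refine (binomProb_le_exp_of_le_mul ht0 ht1 (y := -(d / (2 * μ)) * (μ - d))
    fun k hk => mul_le_mul_of_nonpos_left hk.le (neg_nonpos.2 hlam0)).trans (exp_le_exp.2 ?_)
  calc -(-(d / (2 * μ)) * (μ - d)) + μ * (exp (-(d / (2 * μ))) - 1)
      ≤ -(-(d / (2 * μ)) * (μ - d)) + μ * (-(d / (2 * μ)) + (-(d / (2 * μ))) ^ 2) := by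
        gcongr
        exact exp_sub_one_le_add_sq hlam
    _ = -(d ^ 2 / (4 * μ)) := by
        field_simp
        ring

lemma one_sub_two_mul_exp_le_binomProb_near_mean (ht0 : 0 ≤ t) (ht1 : t ≤ 1) (hμ : 0 < N * t)
    {d : ℝ} (hd0 : 0 ≤ d) (hd : d ≤ 2 * (N * t)) :
    1 - 2 * exp (-(d ^ 2 / (4 * (N * t)))) ≤
      binomProb N t (fun k => N * t - d ≤ k ∧ k ≤ N * t + d) := by
  have htails : binomProb N t (fun k => ¬(N * t - d ≤ k ∧ k ≤ N * t + d)) ≤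
      binomProb N t (fun k => (k : ℝ) < N * t - d) + binomProb N t (fun k => N * t + d < k) := by
    refine le_trans (binomProb_mono ht0 ht1 fun k hk => ?_) (binomProb_or_le ht0 ht1 _ _)
    rwa [not_and_or, not_le, not_le] at hk
  linarith [binomProb_add_binomProb_not (N := N) (t := t)
      (fun k => N * t - d ≤ k ∧ k ≤ N * t + d),
    binomProb_lower_tail_le ht0 ht1 hμ hd0 hd, binomProb_upper_tail_le ht0 ht1 hμ hd0 hd]

lemma one_sub_two_mul_exp_le_binomProb_between {u a : ℝ} (ht0 : 0 ≤ t) (ht1 : t ≤ 1)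
    (ha0 : 0 < a) (haμ : a ≤ 4 * (N * t)) (hu : u ≤ N * t) (hμ : N * t ≤ 2 * u + a / 2) :
    1 - 2 * exp (-(a ^ 2 / (16 * (N * t)))) ≤
      binomProb N t (fun k => u - a ≤ k ∧ k ≤ 2 * u + a) := by
  have key := one_sub_two_mul_exp_le_binomProb_near_mean ht0 ht1 (by linarith) (d := a / 2)
    (by positivity) (by linarith)
  rw [div_pow, div_div, show (2 : ℝ) ^ 2 * (4 * (N * t)) = 16 * (N * t) by ring] at key
  exact key.trans (binomProb_mono ht0 ht1 fun k ⟨hlo, hhi⟩ => ⟨by linarith, by linarith⟩)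

lemma one_sub_two_mul_exp_le_binomProb_scaled {q m m' e : ℝ} (ht0 : 0 ≤ t) (ht1 : t ≤ 1)
    (hq : 0 < q) (hm : m ≤ m') (hm' : m' ≤ 2 * m) (he : e ≤ m') (hqe : 2 ≤ q * e)
    (hμ : (N : ℝ) * t ∈ Set.Icc (q * m') (q * m' + 1)) :
    1 - 2 * exp (-((q * e) ^ 2 / (48 * (q * m)))) ≤
      binomProb N t (fun k => m - e ≤ q⁻¹ * k ∧ q⁻¹ * k ≤ 2 * m + e) := by
  have hqm' : q * m' ≤ q * (2 * m) := mul_le_mul_of_nonneg_left hm' hq.le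
  have hqe' : q * e ≤ q * m' := mul_le_mul_of_nonneg_left he hq.le
  have hqm : q * m ≤ q * m' := mul_le_mul_of_nonneg_left hm hq.le
  calc 1 - 2 * exp (-((q * e) ^ 2 / (48 * (q * m))))
        ≤ 1 - 2 * exp (-((q * e) ^ 2 / (16 * (N * t)))) := by
        gcongr 1 - 2 * exp (-?_)
        exact div_le_div_of_nonneg_left (sq_nonneg _) (by linarith [hμ.1]) (by linarith [hμ.2])
    _ ≤ binomProb N t (fun k => q * m - q * e ≤ k ∧ k ≤ 2 * (q * m) + q * e) :=
        one_sub_two_mul_exp_le_binomProb_between ht0 ht1 (by linarith) (by linarith [hμ.1])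
          (by linarith [hμ.1]) (by linarith [hμ.2])
    _ ≤ _ := by
        refine binomProb_mono ht0 ht1 fun k ⟨hlo, hhi⟩ => ⟨?_, ?_⟩
        · rw [le_inv_mul_iff₀ hq]
          linarith
        · rw [inv_mul_le_iff₀ hq]
          linarith

end Binomial

lemma natCeil_mul_mem_Icc {x t : ℝ} (hx : 0 ≤ x) (ht0 : 0 ≤ t) (ht1 : t ≤ 1) :
    (⌈x⌉₊ : ℝ) * t ∈ Set.Icc (x * t) (x * t + 1) := by
  have hceil := Nat.ceil_lt_add_one hx
  exact ⟨by gcongr; exact Nat.le_ceil x, by nlinarith⟩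

lemma one_sub_two_mul_exp_neg_nonpos {x : ℝ} (hx : x ≤ log 2) : 1 - 2 * exp (-x) ≤ 0 := by
  have : exp (-log 2) ≤ exp (-x) := exp_le_exp.2 (neg_le_neg hx)
  rw [exp_neg, exp_log two_pos] at this
  linarith

/-- There is an absolute constant `κ > 0` such that for every `n ≥ 2`,
`c ≥ 1`, `0 < δ ≤ 1` and naturals `m_p ≥ 1`, `m'_p` with
`m_p ≤ m'_p ≤ 2 * m_p`, `δ * n ≤ m'_p` and `m'_p ≤ 4 * n ^ 2`, if `B` is a
binomial random variable with `N = ⌈4 * c * n * ln n⌉` trials and success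
probability `m'_p / (4 * n ^ 2)` and `M = (n / (c * ln n)) * B`, then
`Pr[m_p - δ * n ≤ M ≤ 2 * m_p + δ * n] ≥ 1 - 2 * n ^ (-κ * δ² * c * n / m_p)`. -/
theorem binomial_estimator_two_approx_absolute :
    ∃ κ : ℝ, 0 < κ ∧
      ∀ n : ℕ, 2 ≤ n →
      ∀ c : ℝ, 1 ≤ c →
      ∀ δ : ℝ, 0 < δ → δ ≤ 1 →
      ∀ mp mp' : ℕ, 1 ≤ mp → mp ≤ mp' → mp' ≤ 2 * mp →
        δ * n ≤ mp' → mp' ≤ 4 * n ^ 2 →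
        1 - 2 * (n : ℝ) ^ (-(κ * δ ^ 2 * c * n / mp)) ≤
          ∑ k ∈ Finset.range (⌈4 * c * n * Real.log n⌉₊ + 1),
            if (mp : ℝ) - δ * n ≤ ((n : ℝ) / (c * Real.log n)) * k ∧
                ((n : ℝ) / (c * Real.log n)) * k ≤ 2 * mp + δ * n then
              binomPMF ⌈4 * c * n * Real.log n⌉₊
                ((mp' : ℝ) / (4 * (n : ℝ) ^ 2)) k
            else 0 := by
  refine ⟨1 / 48, by norm_num, ?_⟩
  intro n hn c hc δ hδ0 _ mp mp' hmp hmp' hmp'2 hδn hmp'n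
  have hn0 : (0 : ℝ) < n := by positivity
  have hL0 : 0 < log n := log_pos (by exact_mod_cast hn)
  have hmp'R : (mp : ℝ) ≤ mp' := by exact_mod_cast hmp'
  have hmp'2R : (mp' : ℝ) ≤ 2 * mp := by exact_mod_cast hmp'2
  have ht0 : (0 : ℝ) ≤ mp' / (4 * n ^ 2) := by positivity
  have ht1 : (mp' : ℝ) / (4 * n ^ 2) ≤ 1 := by
    rw [div_le_one (by positivity)]
    exact_mod_cast hmp'n
  set q := c * log n / n with hq_def
  have hq : 0 < q := by positivity
  rw [rpow_def_of_pos hn0, show (n : ℝ) / (c * log n) = q⁻¹ by rw [hq_def, inv_div],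
    show log n * -(1 / 48 * δ ^ 2 * c * n / mp) = -((q * (δ * n)) ^ 2 / (48 * (q * mp))) by
      rw [hq_def]; field_simp]
  by_cases hqe : q * (δ * n) < 2
  · refine (one_sub_two_mul_exp_neg_nonpos ?_).trans (binomProb_nonneg ht0 ht1 _)
    have hqm : q * (δ * n) ≤ 2 * (q * mp) := by nlinarith
    rw [div_le_iff₀ (by positivity)]
    nlinarith [log_two_gt_d9, mul_le_mul_of_nonneg_left hqm (by positivity : 0 ≤ q * (δ * n)),
      mul_le_mul_of_nonneg_right hqe.le (by positivity : 0 ≤ q * mp)]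
  have hμ := natCeil_mul_mem_Icc (x := 4 * c * n * log n) (by positivity) ht0 ht1
  rw [show 4 * c * n * log n * (mp' / (4 * n ^ 2)) = q * mp' by rw [hq_def]; field_simp] at hμ
  exact one_sub_two_mul_exp_le_binomProb_scaled ht0 ht1 hq hmp'R hmp'2R hδn (not_lt.1 hqe) hμ
end
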